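/- Let K be a field of characteristic 0 containing elements γ₁,…,γ_r none of which is a non-positive rational integer, and let α, β be indeterminates. Consider the polynomial ring R = K[α, 1/α, β][X₀,…,X_{r−1}, Y₀,…,Y_{r−1}]. For sequences ξ_s = (ξ_{s,k})_{k≥1} and ξ'_s = (ξ'_{s,k})_{k≥1} in K (0 ≤ s ≤ r−1) and tuples ℓ = (ℓ₀,…,ℓ_{r−1}), ℓ' = (ℓ'₀,…,ℓ'_{r−1}) of non-negative integers, define Ψ_{α,Ξ_ℓ} = ∘_{s=0}^{r−1} [ψ̃_{α,s} ∘ (θ_{X_s}+ξ_{s,1}) ∘ ⋯ ∘ (θ_{X_s}+ξ_{s,ℓ_s})] and Ψ_{β,Ξ'_{ℓ'}} = ∘_{s=0}^{r−1} [ψ̃'_{β,s} ∘ (θ_{Y_s}+ξ'_{s,1}) ∘ ⋯ ∘ (θ_{Y_s}+ξ'_{s,ℓ'_s})], and let Δ be the specialization β ↦ α. Suppose there exist indices i, j such that, as operators on the one-variable polynomial ring K[t], ∘_{w=0}^i (θ_t+γ_{r−i+w})^{−1} ∘ (θ_t+ξ_{i,1}) ∘ ⋯ ∘ (θ_t+ξ_{i,ℓ_i})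 = ∘_{w'=0}^j (θ_t+γ_{r−j+w'})^{−1} ∘ (θ_t+ξ'_{j,1}) ∘ ⋯ ∘ (θ_t+ξ'_{j,ℓ'_j}), and let P ∈ K[X,Y] be antisymmetric (every odd permutation of the variables X₀,…,X_{r−1},Y₀,…,Y_{r−1} sends P to −P). Then Δ ∘ Ψ_{α,Ξ_ℓ} ∘ Ψ_{β,Ξ'_{ℓ'}}(P) = 0. Similarly, if there exist 0 ≤ i < j ≤ r−1 with ∘_{w=0}^i (θ_t+γ_{r−i+w})^{−1} ∘ (θ_t+ξ_{i,1}) ∘ ⋯ ∘ (θ_t+ξ_{i,ℓ_i}) = ∘_{w'=0}^j (θ_t+γ_{r−j+w'})^{−1} ∘ (θ_t+ξ_{j,1}) ∘ ⋯ ∘ (θ_t+ξ_{j,ℓ_j}), then Ψ_{α,Ξ_ℓ}(P) = 0. -/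

import Mathlib

/-!
Each of `Δ ∘ Ψ_{α,Ξ_ℓ} ∘ Ψ_{β,Ξ'_{ℓ'}}` and `Ψ_{α,Ξ_ℓ}` sends a monomial to a scalar multiple of
a monomial that depends only on symmetric data of the exponents, the scalar being a product of one
eigenvalue `λ_s(k)` of the diagonal operator on `K[t]` per variable `X_s` (and `Y_s`), evaluated at
that variable's exponent `k`. If two variables carry the same eigenvalue function, swapping them
fixes the image of every monomial, so the operator is invariant under that transposition. The
antisymmetric `P` is sent to `-P` by the transposition, so its image `v` satisfies `v = -v`, hence
`v = 0` in characteristic `0`.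
-/

open MvPolynomial

theorem Fintype.prod_apply_swap_of_eq {ι α M : Type*} [Fintype ι] [DecidableEq ι] [CommMonoid M]
    (f : ι → α → M) (n : ι → α) {a b : ι} (hab : f a = f b) :
    ∏ v, f v (n (Equiv.swap a b v)) = ∏ v, f v (n v) := by
  have hf : ∀ v, f v = f (Equiv.swap a b v) := fun v => by
    rw [Equiv.swap_apply_def]
    split_ifs <;> simp_all
  exact Fintype.prod_equiv (Equiv.swap a b) _ _ fun v => by rw [hf]

theorem MvPolynomial.linearMap_rename_eq_of_monomial {σ R M : Type*} [CommSemiring R]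
    [AddCommMonoid M] [Module R M] (L : MvPolynomial σ R →ₗ[R] M) (τ : σ → σ)
    (hL : ∀ e, L (monomial (e.mapDomain τ) 1) = L (monomial e 1)) (p : MvPolynomial σ R) :
    L (rename τ p) = L p := by
  have : L ∘ₗ (rename τ).toLinearMap = L :=
    linearMap_ext fun e => LinearMap.ext_ring (by simpa [rename_monomial] using hL e)
  exact LinearMap.congr_fun this p

theorem MvPolynomial.linearMap_eq_zero_of_rename_eq_neg {σ R M : Type*} [CommRing R]
    [AddCommGroup M] [IsAddTorsionFree M] [Module R M] (L : MvPolynomial σ R →ₗ[R] M)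
    (τ : σ → σ) (hL : ∀ e, L (monomial (e.mapDomain τ) 1) = L (monomial e 1))
    {p : MvPolynomial σ R} (hp : rename τ p = -p) : L p = 0 := by
  rw [← self_eq_neg, ← map_neg, ← hp, linearMap_rename_eq_of_monomial L τ hL]

theorem MvPolynomial.rename_swap_rename_eq_neg {σ τ R : Type*} [CommRing R]
    [DecidableEq σ] [DecidableEq τ] [Fintype σ] {ι : σ → τ} (hι : Function.Injective ι)
    {P : MvPolynomial σ R}
    (hP : ∀ π : Equiv.Perm σ, Equiv.Perm.sign π = -1 → rename π P = -P) {a b : σ} (hab : a ≠ b) :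
    rename (Equiv.swap (ι a) (ι b)) (rename ι P) = -rename ι P := by
  rw [rename_rename, hι.swap_comp, ← rename_rename, hP _ (Equiv.Perm.sign_swap hab), map_neg]

/-- `α, β, X_s, Y_s` are `inl (inl ())`, `inl (inr ())`, `inr (inl s)`, `inr (inr s)`. -/
abbrev Vars (r : ℕ) : Type := (Unit ⊕ Unit) ⊕ (Fin r ⊕ Fin r)

section

variable {K : Type*} [Field K] {r : ℕ}

/-- The eigenvalue on `t^k` of `∘_{w=0}^s (θ+γ_{r-s+w})⁻¹ ∘ (θ+ξ_{s,1}) ∘ ⋯ ∘ (θ+ξ_{s,ℓ_s})`. -/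
def diagEigenvalue (γ : ℕ → K) (ξ : Fin r → ℕ → K) (ℓ : Fin r → ℕ) (s : Fin r) (k : ℕ) : K :=
  (∏ w ∈ Finset.range (ℓ s), ((k : K) + ξ s (w + 1))) *
    (∏ w ∈ Finset.range ((s : ℕ) + 1), ((k : K) + γ (r - (s : ℕ) + w)))⁻¹

/-- `Ψ` is `Ψ_{α,Ξ_ℓ}`, given by its values on monomials. -/
def IsPsiAlpha (γ : ℕ → K) (ξ : Fin r → ℕ → K) (ℓ : Fin r → ℕ)
    (Ψ : MvPolynomial (Vars r) K →ₗ[K] MvPolynomial (Vars r) K) : Prop :=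
  ∀ e : Vars r →₀ ℕ, Ψ (monomial e 1) =
    (∏ s : Fin r, diagEigenvalue γ ξ ℓ s (e (Sum.inr (Sum.inl s)))) •
      monomial
        (Finsupp.equivFunOnFinite.symm fun v =>
          match v with
          | Sum.inl (Sum.inl _) =>
              e (Sum.inl (Sum.inl ())) + ∑ s : Fin r, e (Sum.inr (Sum.inl s))
          | Sum.inl (Sum.inr _) => e (Sum.inl (Sum.inr ()))
          | Sum.inr (Sum.inl _) => 0
          | Sum.inr (Sum.inr s) => e (Sum.inr (Sum.inr s))) 1

/-- `Ψ` is `Ψ_{β,Ξ_ℓ}`, given by its values on monomials. -/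
def IsPsiBeta (γ : ℕ → K) (ξ : Fin r → ℕ → K) (ℓ : Fin r → ℕ)
    (Ψ : MvPolynomial (Vars r) K →ₗ[K] MvPolynomial (Vars r) K) : Prop :=
  ∀ e : Vars r →₀ ℕ, Ψ (monomial e 1) =
    (∏ s : Fin r, diagEigenvalue γ ξ ℓ s (e (Sum.inr (Sum.inr s)))) •
      monomial
        (Finsupp.equivFunOnFinite.symm fun v =>
          match v with
          | Sum.inl (Sum.inl _) => e (Sum.inl (Sum.inl ()))
          | Sum.inl (Sum.inr _) =>
              e (Sum.inl (Sum.inr ())) + ∑ s : Fin r, e (Sum.inr (Sum.inr s))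
          | Sum.inr (Sum.inl s) => e (Sum.inr (Sum.inl s))
          | Sum.inr (Sum.inr _) => 0) 1

variable (K r) in
noncomputable def specializeBeta : MvPolynomial (Vars r) K →ₐ[K] MvPolynomial (Vars r) K :=
  aeval fun v =>
    match v with
    | Sum.inl _ => X (Sum.inl (Sum.inl ()))
    | Sum.inr w => X (Sum.inr w)

variable {γ : ℕ → K} {ξ ξ' : Fin r → ℕ → K} {ℓ ℓ' : Fin r → ℕ}
  {ΨA ΨB : MvPolynomial (Vars r) K →ₗ[K] MvPolynomial (Vars r) K}

theorem specializeBeta_psi_psi_monomial (hA : IsPsiAlpha γ ξ ℓ ΨA) (hB : IsPsiBeta γ ξ' ℓ' ΨB)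
    (e : Vars r →₀ ℕ) :
    specializeBeta K r (ΨA (ΨB (monomial e 1))) =
      (∏ v : Fin r ⊕ Fin r,
          Sum.elim (diagEigenvalue γ ξ ℓ) (diagEigenvalue γ ξ' ℓ') v (e (Sum.inr v))) •
        X (Sum.inl (Sum.inl ())) ^ ∑ v, e v := by
  rw [hB e, map_smul, hA]
  simp only [map_smul, smul_smul, Finsupp.coe_equivFunOnFinite_symm]
  rw [specializeBeta, aeval_monomial, map_one, one_mul,
    Finsupp.prod_fintype _ _ fun v => pow_zero _]
  simp only [Finsupp.coe_equivFunOnFinite_symm, Fintype.prod_sum_type, Fintype.sum_sum_type,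
    Sum.elim_inl, Sum.elim_inr]
  congr 1
  · exact mul_comm _ _
  · simp [pow_add]
    ring

theorem specializeBeta_psi_psi_rename_eq_zero [CharZero K] (hA : IsPsiAlpha γ ξ ℓ ΨA)
    (hB : IsPsiBeta γ ξ' ℓ' ΨB) {P : MvPolynomial (Fin r ⊕ Fin r) K}
    (hP : ∀ π : Equiv.Perm (Fin r ⊕ Fin r), Equiv.Perm.sign π = -1 → rename π P = -P)
    {i j : Fin r} (hij : diagEigenvalue γ ξ ℓ i = diagEigenvalue γ ξ' ℓ' j) :
    specializeBeta K r (ΨA (ΨB (rename Sum.inr P))) = 0 := by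
  refine linearMap_eq_zero_of_rename_eq_neg ((specializeBeta K r).toLinearMap ∘ₗ ΨA ∘ₗ ΨB)
    (Equiv.swap (Sum.inr (Sum.inl i)) (Sum.inr (Sum.inr j))) (fun e => ?_)
    (rename_swap_rename_eq_neg Sum.inr_injective hP Sum.inl_ne_inr)
  simp only [LinearMap.comp_apply, AlgHom.toLinearMap_apply,
    specializeBeta_psi_psi_monomial hA hB, Finsupp.mapDomain_equiv_apply, Equiv.symm_swap,
    Equiv.sum_comp, Sum.inr_injective.swap_apply]
  rw [Fintype.prod_apply_swap_of_eq _ (fun v => e (Sum.inr v)) hij]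

theorem psiAlpha_rename_eq_zero [CharZero K] (hA : IsPsiAlpha γ ξ ℓ ΨA)
    {P : MvPolynomial (Fin r ⊕ Fin r) K}
    (hP : ∀ π : Equiv.Perm (Fin r ⊕ Fin r), Equiv.Perm.sign π = -1 → rename π P = -P)
    {i j : Fin r} (hne : i ≠ j) (hij : diagEigenvalue γ ξ ℓ i = diagEigenvalue γ ξ ℓ j) :
    ΨA (rename Sum.inr P) = 0 := by
  have hX : Function.Injective (fun s : Fin r => (Sum.inr (Sum.inl s) : Vars r)) :=
    Sum.inr_injective.comp Sum.inl_injective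
  refine linearMap_eq_zero_of_rename_eq_neg ΨA
    (Equiv.swap (Sum.inr (Sum.inl i)) (Sum.inr (Sum.inl j))) (fun e => ?_)
    (rename_swap_rename_eq_neg Sum.inr_injective hP (Sum.inl_injective.ne hne))
  rw [hA, hA]
  congr 1
  · simp only [Finsupp.mapDomain_equiv_apply, Equiv.symm_swap, hX.swap_apply]
    exact Fintype.prod_apply_swap_of_eq _ (fun s => e (Sum.inr (Sum.inl s))) hij
  · congr 2
    ext v
    rcases v with (_ | _) | (s | s) <;>
      simp [Finsupp.mapDomain_equiv_apply, Equiv.swap_apply_of_ne_of_ne, hX.swap_apply,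
        Equiv.sum_comp (Equiv.swap i j) fun s => e (Sum.inr (Sum.inl s))]

end

theorem statement14 (K : Type*) [Field K] [CharZero K]
    (r : ℕ)
    (γ : ℕ → K)
    (ξ ξ' : Fin r → ℕ → K) (ℓv ℓv' : Fin r → ℕ)
    (ΨA ΨB : MvPolynomial ((Unit ⊕ Unit) ⊕ (Fin r ⊕ Fin r)) K →ₗ[K]
      MvPolynomial ((Unit ⊕ Unit) ⊕ (Fin r ⊕ Fin r)) K)
    (hΨA : ∀ e : ((Unit ⊕ Unit) ⊕ (Fin r ⊕ Fin r)) →₀ ℕ,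
      ΨA (MvPolynomial.monomial e 1) =
        (∏ s : Fin r,
          (∏ w ∈ Finset.range (ℓv s), ((e (Sum.inr (Sum.inl s)) : K) + ξ s (w + 1))) *
            (∏ w ∈ Finset.range ((s : ℕ) + 1),
              ((e (Sum.inr (Sum.inl s)) : K) + γ (r - (s : ℕ) + w)))⁻¹) •
        MvPolynomial.monomial
          (Finsupp.equivFunOnFinite.symm fun v =>
            match v with
            | Sum.inl (Sum.inl _) =>
                e (Sum.inl (Sum.inl ())) + ∑ s : Fin r, e (Sum.inr (Sum.inl s))
            | Sum.inl (Sum.inr _) => e (Sum.inl (Sum.inr ()))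
            | Sum.inr (Sum.inl _) => 0
            | Sum.inr (Sum.inr s) => e (Sum.inr (Sum.inr s))) 1)
    (hΨB : ∀ e : ((Unit ⊕ Unit) ⊕ (Fin r ⊕ Fin r)) →₀ ℕ,
      ΨB (MvPolynomial.monomial e 1) =
        (∏ s : Fin r,
          (∏ w ∈ Finset.range (ℓv' s), ((e (Sum.inr (Sum.inr s)) : K) + ξ' s (w + 1))) *
            (∏ w ∈ Finset.range ((s : ℕ) + 1),
              ((e (Sum.inr (Sum.inr s)) : K) + γ (r - (s : ℕ) + w)))⁻¹) •
        MvPolynomial.monomial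
          (Finsupp.equivFunOnFinite.symm fun v =>
            match v with
            | Sum.inl (Sum.inl _) => e (Sum.inl (Sum.inl ()))
            | Sum.inl (Sum.inr _) =>
                e (Sum.inl (Sum.inr ())) + ∑ s : Fin r, e (Sum.inr (Sum.inr s))
            | Sum.inr (Sum.inl s) => e (Sum.inr (Sum.inl s))
            | Sum.inr (Sum.inr _) => 0) 1)
    (P : MvPolynomial (Fin r ⊕ Fin r) K)
    (hP : ∀ τ : Equiv.Perm (Fin r ⊕ Fin r), Equiv.Perm.sign τ = -1 →
      MvPolynomial.rename (τ : (Fin r ⊕ Fin r) → (Fin r ⊕ Fin r)) P = -P) :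
    ((∃ i j : Fin r, ∀ k : ℕ,
        (∏ w ∈ Finset.range (ℓv i), ((k : K) + ξ i (w + 1))) /
            (∏ w ∈ Finset.range ((i : ℕ) + 1), ((k : K) + γ (r - (i : ℕ) + w))) =
          (∏ w ∈ Finset.range (ℓv' j), ((k : K) + ξ' j (w + 1))) /
            (∏ w ∈ Finset.range ((j : ℕ) + 1), ((k : K) + γ (r - (j : ℕ) + w)))) →
      MvPolynomial.aeval
        (fun v : (Unit ⊕ Unit) ⊕ (Fin r ⊕ Fin r) =>
          match v with
          | Sum.inl _ => (MvPolynomial.X (Sum.inl (Sum.inl ())) :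
              MvPolynomial ((Unit ⊕ Unit) ⊕ (Fin r ⊕ Fin r)) K)
          | Sum.inr w => MvPolynomial.X (Sum.inr w))
        (ΨA (ΨB (MvPolynomial.rename (Sum.inr : (Fin r ⊕ Fin r) → _) P))) = 0) ∧
    ((∃ i j : Fin r, i < j ∧ ∀ k : ℕ,
        (∏ w ∈ Finset.range (ℓv i), ((k : K) + ξ i (w + 1))) /
            (∏ w ∈ Finset.range ((i : ℕ) + 1), ((k : K) + γ (r - (i : ℕ) + w))) =
          (∏ w ∈ Finset.range (ℓv j), ((k : K) + ξ j (w + 1))) /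
            (∏ w ∈ Finset.range ((j : ℕ) + 1), ((k : K) + γ (r - (j : ℕ) + w)))) →
      ΨA (MvPolynomial.rename (Sum.inr : (Fin r ⊕ Fin r) → _) P) = 0) := by
  constructor
  · rintro ⟨i, j, hc⟩
    have hij : diagEigenvalue γ ξ ℓv i = diagEigenvalue γ ξ' ℓv' j :=
      funext fun k => by simpa only [diagEigenvalue, div_eq_mul_inv] using hc k
    exact specializeBeta_psi_psi_rename_eq_zero hΨA hΨB hP hij
  · rintro ⟨i, j, hlt, hc⟩
    have hij : diagEigenvalue γ ξ ℓv i = diagEigenvalue γ ξ ℓv j :=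
      funext fun k => by simpa only [diagEigenvalue, div_eq_mul_inv] using hc k
    exact psiAlpha_rename_eq_zero hΨA hP hlt.ne hij
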